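/- Let f = h₁(x)h₂(y)ρ_y^μ Ψ_κ(ρ_x ρ_y) where h₁ is harmonic homogeneous of degree k in x_1,…,x_p, h₂ is harmonic homogeneous of degree l in y_1,…,y_q, ρ_x = r_x²/2, ρ_y = r_y²/2, κ = k + p/2, and Ψ_κ(u) = Σ_j ((-1)^j/(j!(κ)_j))u^j, and let Ψ'_κ, Ψ''_κ denote derivatives of Ψ_κ evaluated at ρ_xρ_y. Then E_y f = (l+2μ)f + 2h₁h₂ρ_xρ_y^{μ+1}Ψ'_κ and Δ_y f = ((2l+q)μ + 2μ(μ-1))h₁h₂ρ_y^{μ-1}Ψ_κ + ((2l+q)+4μ)h₁h₂ρ_xρ_y^μΨ'_κ + 2h₁h₂ρ_x²ρ_y^{μ+1}Ψ''_κ, and consequently (E_y² + (q-2)E_y - r_y²Δ_y) f = ((l+2μ)² + (q-2)(l+2μ) - 2μ(2l+q+2μ-2)) f. -/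

import Mathlib

open MvPolynomial

noncomputable section

/-- Partial derivative in the j-th y-variable of a function of (x, y). -/
noncomputable def pdy {p q : ℕ} (j : Fin q) (F : (Fin p → ℝ) → (Fin q → ℝ) → ℝ) :
    (Fin p → ℝ) → (Fin q → ℝ) → ℝ :=
  fun x y => fderiv ℝ (F x) y (Pi.single j 1)

/-- The Laplacian Δ_y = Σⱼ ∂_{yⱼ}². -/
noncomputable def lapY {p q : ℕ} (F : (Fin p → ℝ) → (Fin q → ℝ) → ℝ) :
    (Fin p → ℝ) → (Fin q → ℝ) → ℝ :=
  fun x y => ∑ j : Fin q, pdy j (pdy j F) x y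

/-- The Euler operator E_y = Σⱼ yⱼ ∂_{yⱼ}. -/
noncomputable def eulY {p q : ℕ} (F : (Fin p → ℝ) → (Fin q → ℝ) → ℝ) :
    (Fin p → ℝ) → (Fin q → ℝ) → ℝ :=
  fun x y => ∑ j : Fin q, y j * pdy j F x y

/-- The polynomial Laplacian. -/
noncomputable def lapP {n : ℕ} (P : MvPolynomial (Fin n) ℝ) : MvPolynomial (Fin n) ℝ :=
  ∑ i : Fin n, pderiv i (pderiv i P)

/-- Ψ_α(u) = Σⱼ ((-1)ʲ/(j!(α)ⱼ))uʲ. -/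
noncomputable def Psi (α : ℝ) (u : ℝ) : ℝ :=
  ∑' j : ℕ, ((-1) ^ j / ((j.factorial : ℝ) * (ascPochhammer ℝ j).eval α)) * u ^ j

/-- ρ_x = r_x²/2. -/
noncomputable def rhoX {p : ℕ} (x : Fin p → ℝ) : ℝ := (∑ i : Fin p, x i ^ 2) / 2

/-- ρ_y = r_y²/2. -/
noncomputable def rhoY {q : ℕ} (y : Fin q → ℝ) : ℝ := (∑ j : Fin q, y j ^ 2) / 2

/-- series sum -/
noncomputable def ser (c : ℕ → ℝ) (u : ℝ) : ℝ := ∑' j : ℕ, c j * u ^ j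

def shiftc (c : ℕ → ℝ) (n : ℕ) : ℝ := c (n + 1) * (n + 1)

lemma summable_aux {c : ℕ → ℝ} {A : ℝ} (hb : ∀ j, |c j| ≤ A / j.factorial) (r : ℝ)
    (hr : 0 ≤ r) : Summable (fun n => |c n| * (n + 1) * r ^ n) := by
  refine Summable.of_nonneg_of_le (fun n => by positivity) ?_
    ((Real.summable_pow_div_factorial (2 * r)).mul_left A)
  intro n
  have h1 : |c n| * (n + 1) * r ^ n ≤ (A / n.factorial) * (n + 1) * r ^ n := by
    have := hb n
    have : (0:ℝ) ≤ (n+1) * r ^ n := by positivity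
    nlinarith [hb n, pow_nonneg hr n]
  refine h1.trans ?_
  have h2 : ((n : ℝ) + 1) ≤ 2 ^ n := by
    exact_mod_cast Nat.succ_le_of_lt (Nat.lt_two_pow_self (n := n))
  have hA : (0 : ℝ) ≤ A := le_trans (abs_nonneg _) (by simpa using hb 0)
  have hfac : (0:ℝ) < n.factorial := by positivity
  rw [mul_pow, div_mul_eq_mul_div, div_mul_eq_mul_div, mul_div_assoc, mul_div_assoc]
  have hX : (0:ℝ) ≤ r ^ n / n.factorial := by positivity
  nlinarith [mul_le_mul_of_nonneg_right h2 hX, hA, mul_nonneg hA hX]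

lemma summable_ser {c : ℕ → ℝ} {A : ℝ} (hb : ∀ j, |c j| ≤ A / j.factorial) (u : ℝ) :
    Summable (fun n => c n * u ^ n) := by
  apply Summable.of_abs
  refine Summable.of_nonneg_of_le (fun n => abs_nonneg _) ?_
    (summable_aux hb (|u|) (abs_nonneg u))
  intro n
  rw [abs_mul, abs_pow]
  nlinarith [mul_nonneg (abs_nonneg (c n)) (pow_nonneg (abs_nonneg u) n),
    (Nat.cast_nonneg n : (0:ℝ) ≤ n)]

lemma shiftc_bound {c : ℕ → ℝ} {A : ℝ} (hb : ∀ j, |c j| ≤ A / j.factorial) :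
    ∀ j, |shiftc c j| ≤ A / j.factorial := by
  intro j
  have h := hb (j + 1)
  rw [shiftc, abs_mul, abs_of_nonneg (by positivity : (0:ℝ) ≤ (j:ℝ)+1)]
  have hfac : (j+1).factorial = (j+1) * j.factorial := Nat.factorial_succ j
  have hfj : (0:ℝ) < j.factorial := by positivity
  calc |c (j+1)| * ((j:ℝ)+1) ≤ A / (j+1).factorial * ((j:ℝ)+1) := by
        apply mul_le_mul_of_nonneg_right h (by positivity)
    _ = A / j.factorial := by
        rw [hfac]; push_cast; field_simp

lemma hasDerivAt_ser {c : ℕ → ℝ} {A : ℝ} (hb : ∀ j, |c j| ≤ A / j.factorial) (x : ℝ) :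
    HasDerivAt (ser c) (ser (shiftc c) x) x := by
  set R : ℝ := |x| + 1 with hR
  have hx : x ∈ Metric.ball (0:ℝ) R := by
    simp [hR, Real.dist_eq]
  have hmain : HasDerivAt (fun z => ∑' n, c n * z ^ n)
      (∑' n, c n * (n * x ^ (n - 1))) x := by
    apply hasDerivAt_tsum_of_isPreconnected
      (u := fun n => |c n| * (n + 1) * R ^ n)
      (summable_aux hb R (by positivity)) Metric.isOpen_ball
      ((convex_ball (0:ℝ) R).isPreconnected)
      (g' := fun n y => c n * (n * y ^ (n - 1)))
      (fun n y _ => by simpa using (hasDerivAt_pow n y).const_mul (c n))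
      ?_ (Metric.mem_ball_self (by positivity)) ?_ hx
    · intro n y hy
      simp only [Metric.mem_ball, Real.dist_eq, sub_zero] at hy
      rw [Real.norm_eq_abs, abs_mul, abs_mul]
      have h1 : |(n:ℝ)| ≤ (n:ℝ) + 1 := by
        rw [abs_of_nonneg (Nat.cast_nonneg n)]; linarith
      have h2 : |y ^ (n-1)| ≤ R ^ n := by
        rw [abs_pow]
        calc |y| ^ (n-1) ≤ R ^ (n-1) :=
              pow_le_pow_left₀ (abs_nonneg y) hy.le _
          _ ≤ R ^ n := pow_le_pow_right₀ (by rw [hR]; linarith [abs_nonneg x]) (Nat.sub_le n 1)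
      calc |c n| * (|(n:ℝ)| * |y ^ (n-1)|) ≤ |c n| * (((n:ℝ)+1) * R ^ n) := by
            apply mul_le_mul_of_nonneg_left _ (abs_nonneg _)
            apply mul_le_mul h1 h2 (abs_nonneg _) (by positivity)
        _ = |c n| * ((n:ℝ)+1) * R ^ n := by ring
    · exact summable_ser hb 0
  have hre : (∑' n, c n * ((n:ℝ) * x ^ (n - 1))) = ser (shiftc c) x := by
    have hs : Summable (fun n => c n * ((n:ℝ) * x ^ (n - 1))) := by
      apply Summable.of_abs
      refine Summable.of_nonneg_of_le (fun n => abs_nonneg _) ?_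
        (summable_aux hb (|x| + 1) (by positivity))
      intro n
      rw [abs_mul, abs_mul, abs_pow]
      have h2 : |x| ^ (n-1) ≤ (|x|+1) ^ n :=
        le_trans (pow_le_pow_left₀ (abs_nonneg x) (by linarith) _)
          (pow_le_pow_right₀ (by linarith [abs_nonneg x]) (Nat.sub_le n 1))
      have h1 : |(n:ℝ)| ≤ (n:ℝ)+1 := by
        rw [abs_of_nonneg (Nat.cast_nonneg n)]; linarith
      calc |c n| * (|(n:ℝ)| * |x| ^ (n-1)) ≤ |c n| * (((n:ℝ)+1) * (|x|+1) ^ n) := by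
            apply mul_le_mul_of_nonneg_left _ (abs_nonneg _)
            apply mul_le_mul h1 h2 (by positivity) (by positivity)
        _ = |c n| * ((n:ℝ)+1) * (|x|+1) ^ n := by ring
    rw [ser, hs.tsum_eq_zero_add]
    simp only [Nat.cast_zero, zero_mul, mul_zero, zero_add, shiftc]
    apply tsum_congr
    intro n
    push_cast
    ring_nf
  rw [← hre]
  exact hmain

def psiC (κ : ℝ) (j : ℕ) : ℝ := (-1) ^ j / ((j.factorial : ℝ) * (ascPochhammer ℝ j).eval κ)

lemma Psi_eq_ser (κ : ℝ) : Psi κ = ser (psiC κ) := rfl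

lemma ascPochhammer_lb {κ : ℝ} (hκ : 0 < κ) :
    ∀ j : ℕ, 1 ≤ j → κ * (j - 1).factorial ≤ (ascPochhammer ℝ j).eval κ := by
  intro j hj
  induction j with
  | zero => omega
  | succ n ih =>
    rcases Nat.eq_or_lt_of_le hj with h | h
    · simp [← h, ascPochhammer_one]
    · have hn : 1 ≤ n := by omega
      have ihn := ih hn
      rw [ascPochhammer_succ_right]
      simp only [Polynomial.eval_mul, Polynomial.eval_add, Polynomial.eval_X,
        Polynomial.eval_natCast]
      have hfac : (n - 1).factorial * n = n.factorial := by
        cases n with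
        | zero => omega
        | succ m => simp [Nat.factorial_succ, Nat.mul_comm]
      have h1 : κ * (n.factorial : ℝ) = κ * (n-1).factorial * n := by
        rw [← hfac]; push_cast; ring
      have h2 : (n:ℝ) ≤ κ + n := by linarith
      have h3 : (0:ℝ) < (n-1).factorial := by positivity
      have : κ * (n-1).factorial * n ≤ (ascPochhammer ℝ n).eval κ * (κ + n) := by
        have hpos : (0:ℝ) < (ascPochhammer ℝ n).eval κ :=
          lt_of_lt_of_le (by positivity) ihn
        nlinarith
      simpa [Nat.add_sub_cancel, h1] using this

lemma psiC_bound (κ : ℝ) (hκ : 0 ≤ κ) : ∃ A : ℝ, ∀ j, |psiC κ j| ≤ A / j.factorial := by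
  rcases eq_or_lt_of_le hκ with h | h
  · refine ⟨1, fun j => ?_⟩
    cases j with
    | zero => simp [psiC]
    | succ n =>
      have : (ascPochhammer ℝ (n+1)).eval κ = 0 := by
        rw [ascPochhammer_succ_left]
        simp [← h]
      simp [psiC, this]
  · refine ⟨1 + 1/κ, fun j => ?_⟩
    have hd : (0:ℝ) < 1/κ := by positivity
    cases j with
    | zero => simpa [psiC] using by linarith
    | succ n =>
      have hlb := ascPochhammer_lb h (n+1) (by omega)
      rw [Nat.add_sub_cancel] at hlb
      have hpos : (0:ℝ) < (ascPochhammer ℝ (n+1)).eval κ :=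
        lt_of_lt_of_le (by positivity) hlb
      have habs : |psiC κ (n+1)| =
          1 / (((n+1).factorial : ℝ) * (ascPochhammer ℝ (n+1)).eval κ) := by
        rw [psiC, abs_div, abs_pow, abs_neg, abs_one, one_pow, abs_of_nonneg
          (by positivity : (0:ℝ) ≤ ((n+1).factorial:ℝ) * (ascPochhammer ℝ (n+1)).eval κ)]
      rw [habs, div_le_div_iff₀ (by positivity) (by positivity)]
      have hn1 : (1:ℝ) ≤ (n.factorial : ℝ) := by exact_mod_cast n.factorial_pos
      have step1 : (n.factorial:ℝ) ≤ (1 + 1/κ) * (ascPochhammer ℝ (n+1)).eval κ := by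
        have h1 : (1/κ) * (κ * n.factorial) = n.factorial := by field_simp
        nlinarith
      have step2 : (1:ℝ) ≤ (1 + 1/κ) * (ascPochhammer ℝ (n+1)).eval κ := le_trans hn1 step1
      have fpos : (0:ℝ) < ((n+1).factorial : ℝ) := by positivity
      nlinarith [mul_le_mul_of_nonneg_left step2 fpos.le]

lemma psi_derivs (κ : ℝ) (hκ : 0 ≤ κ) :
    (∀ u, HasDerivAt (Psi κ) (deriv (Psi κ) u) u) ∧
    (∀ u, HasDerivAt (deriv (Psi κ)) (deriv (deriv (Psi κ)) u) u) := by
  obtain ⟨A, hb⟩ := psiC_bound κ hκ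
  have h1 : ∀ u, HasDerivAt (Psi κ) (ser (shiftc (psiC κ)) u) u := by
    rw [Psi_eq_ser]; exact hasDerivAt_ser hb
  have hder : deriv (Psi κ) = ser (shiftc (psiC κ)) := funext fun u => (h1 u).deriv
  have h2 : ∀ u, HasDerivAt (deriv (Psi κ)) (ser (shiftc (shiftc (psiC κ))) u) u := by
    rw [hder]; exact hasDerivAt_ser (shiftc_bound hb)
  refine ⟨fun u => ?_, fun u => ?_⟩
  · rw [hder]; exact h1 u
  · have hder2 : deriv (deriv (Psi κ)) = ser (shiftc (shiftc (psiC κ))) :=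
      funext fun u => (h2 u).deriv
    rw [hder2]; exact h2 u

variable {q : ℕ}

noncomputable def projL (q : ℕ) (i : Fin q) : (Fin q → ℝ) →L[ℝ] ℝ :=
  ContinuousLinearMap.proj i

@[simp] lemma projL_apply (i : Fin q) (v : Fin q → ℝ) : projL q i v = v i := rfl

lemma hasFDerivAt_evalP (Q : MvPolynomial (Fin q) ℝ) (y : Fin q → ℝ) :
    HasFDerivAt (fun y : Fin q → ℝ => eval y Q)
      (∑ i : Fin q, eval y (pderiv i Q) • projL q i) y := by
  induction Q using MvPolynomial.induction_on with
  | C a =>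
      simp only [eval_C, pderiv_C, map_zero, zero_smul, Finset.sum_const_zero]
      exact hasFDerivAt_const a y
  | add f g hf hg =>
      have H := hf.fun_add hg
      have hfun : (fun y : Fin q → ℝ => eval y (f + g)) =
          fun y => eval y f + eval y g := by funext z; simp
      rw [hfun]
      refine H.congr_fderiv ?_
      rw [← Finset.sum_add_distrib]
      refine Finset.sum_congr rfl fun i _ => ?_
      rw [map_add, map_add, add_smul]
  | mul_X f i hf =>
      have hx : HasFDerivAt (fun y : Fin q → ℝ => y i) (projL q i) y :=
        (projL q i).hasFDerivAt
      have H := hf.mul hx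
      have hfun : (fun y : Fin q → ℝ => eval y (f * X i)) = fun y => eval y f * y i := by
        funext z; simp
      rw [hfun]
      have hEq : (∑ j : Fin q, eval y (pderiv j (f * X i)) • projL q j)
          = eval y f • projL q i + y i • ∑ j : Fin q, eval y (pderiv j f) • projL q j := by
        ext v
        simp only [ContinuousLinearMap.sum_apply, ContinuousLinearMap.smul_apply,
          smul_eq_mul, projL_apply, ContinuousLinearMap.add_apply,
          pderiv_mul, map_add, eval_mul, eval_X, pderiv_X, Pi.single_apply]
        rw [Finset.sum_congr rfl (fun j _ => by
          rw [apply_ite (eval y), map_one, map_zero, add_mul, mul_ite, mul_one, mul_zero,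
            ite_mul, zero_mul])]
        rw [Finset.sum_add_distrib, Finset.sum_ite_eq, Finset.mul_sum]
        simp only [Finset.mem_univ, if_true]
        rw [add_comm]
        congr 1
        exact Finset.sum_congr rfl fun j _ => by ring
      rw [hEq]
      exact H

lemma euler_monomial (d : Fin q →₀ ℕ) (a : ℝ) (y : Fin q → ℝ) (j : Fin q) :
    y j * eval y (pderiv j (monomial d a)) = (d j : ℝ) * eval y (monomial d a) := by
  rw [pderiv_monomial, eval_monomial, eval_monomial, Finsupp.prod_pow, Finsupp.prod_pow]
  by_cases h : d j = 0
  · simp [h]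
  · have hprod : y j * ∏ i : Fin q, y i ^ (((d - Finsupp.single j 1) : Fin q →₀ ℕ) i)
        = ∏ i : Fin q, y i ^ d i := by
      rw [Fintype.prod_eq_mul_prod_compl j (fun i => y i ^ (((d - Finsupp.single j 1) : Fin q →₀ ℕ) i)),
        Fintype.prod_eq_mul_prod_compl j (fun i => y i ^ d i)]
      have h1 : ((d - Finsupp.single j 1) : Fin q →₀ ℕ) j = d j - 1 := by
        simp [Finsupp.tsub_apply]
      have h2 : ∀ i, i ≠ j → ((d - Finsupp.single j 1) : Fin q →₀ ℕ) i = d i := by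
        intro i hi
        simp [Finsupp.tsub_apply, Finsupp.single_apply, Ne.symm hi]
      rw [h1, ← mul_assoc, ← pow_succ']
      rw [Nat.sub_add_cancel (Nat.one_le_iff_ne_zero.mpr h)]
      congr 1
      exact Finset.prod_congr rfl fun i hi => by
        rw [h2 i (by simpa using (Finset.mem_compl.mp hi))]
    push_cast
    calc y j * (a * d j * ∏ i : Fin q, y i ^ (((d - Finsupp.single j 1) : Fin q →₀ ℕ) i))
        = (d j : ℝ) * a * (y j * ∏ i : Fin q, y i ^ (((d - Finsupp.single j 1) : Fin q →₀ ℕ) i)) := by ring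
      _ = (d j : ℝ) * (a * ∏ i : Fin q, y i ^ d i) := by rw [hprod]; ring

lemma euler_eval {l : ℕ} {P : MvPolynomial (Fin q) ℝ} (hP : P.IsHomogeneous l)
    (y : Fin q → ℝ) : ∑ j : Fin q, y j * eval y (pderiv j P) = (l : ℝ) * eval y P := by
  conv_lhs => rw [← support_sum_monomial_coeff P]
  conv_rhs => rw [← support_sum_monomial_coeff P]
  rw [map_sum (eval y)]
  simp only [map_sum, Finset.mul_sum]
  rw [Finset.sum_comm]
  refine Finset.sum_congr rfl fun d hd => ?_
  have hdeg : (∑ j : Fin q, (d j : ℝ)) = (l : ℝ) := by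
    have h0 := hP (mem_support_iff.mp hd)
    rw [Finsupp.weight_apply] at h0
    simp only [Pi.one_apply, smul_eq_mul, mul_one] at h0
    rw [Finsupp.sum_fintype _ _ (fun i => rfl)] at h0
    exact_mod_cast h0
  calc ∑ j : Fin q, y j * eval y (pderiv j (monomial d (coeff d P)))
      = ∑ j : Fin q, (d j : ℝ) * eval y (monomial d (coeff d P)) :=
        Finset.sum_congr rfl fun j _ => euler_monomial d _ y j
    _ = (l : ℝ) * eval y (monomial d (coeff d P)) := by
        rw [← Finset.sum_mul, hdeg]

lemma harmonic_eval {P : MvPolynomial (Fin q) ℝ} (hP : lapP P = 0) (y : Fin q → ℝ) :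
    ∑ j : Fin q, eval y (pderiv j (pderiv j P)) = 0 := by
  have : eval y (lapP P) = 0 := by rw [hP]; simp
  rw [lapP, map_sum (eval y)] at this
  exact this

noncomputable def Sh (b : ℝ) (Q : MvPolynomial (Fin q) ℝ) (s : ℕ) (h : ℝ → ℝ) (C : ℝ)
    (y : Fin q → ℝ) : ℝ := b * eval y Q * rhoY y ^ s * h (C * rhoY y)

noncomputable def rPoly (q : ℕ) : MvPolynomial (Fin q) ℝ := C (1/2) * ∑ i : Fin q, X i ^ 2

lemma rhoY_eq : (rhoY : (Fin q → ℝ) → ℝ) = fun y => eval y (rPoly q) := by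
  funext y
  simp [rhoY, rPoly]
  ring

lemma pderiv_rPoly (j : Fin q) : pderiv j (rPoly q) = X j := by
  rw [rPoly, pderiv_C_mul, map_sum]
  rw [Finset.sum_congr rfl (fun i _ => by
    rw [pow_two, pderiv_mul, pderiv_X, Pi.single_apply, ite_mul, one_mul, zero_mul,
      mul_ite, mul_one, mul_zero, ite_add_ite, zero_add])]
  rw [Finset.sum_ite_eq' Finset.univ j]
  simp only [Finset.mem_univ, if_true]
  have h2 : (C (1/2 : ℝ) : MvPolynomial (Fin q) ℝ) * 2 = 1 := by
    have ht : (2 : MvPolynomial (Fin q) ℝ) = C (2:ℝ) := (map_ofNat (C : ℝ →+* MvPolynomial (Fin q) ℝ) 2).symm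
    rw [ht, ← C_mul]; norm_num
  calc (C (1/2:ℝ) : MvPolynomial (Fin q) ℝ) * (X j + X j) = (C (1/2:ℝ) * 2) * X j := by ring
    _ = X j := by rw [h2, one_mul]

noncomputable def rhoL (q : ℕ) (y : Fin q → ℝ) : (Fin q → ℝ) →L[ℝ] ℝ :=
  ∑ i : Fin q, y i • projL q i

lemma hasFDerivAt_rhoY (y : Fin q → ℝ) : HasFDerivAt rhoY (rhoL q y) y := by
  have h := hasFDerivAt_evalP (rPoly q) y
  rw [← rhoY_eq] at h
  have : (∑ i : Fin q, eval y (pderiv i (rPoly q)) • projL q i) = rhoL q y := by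
    rw [rhoL]
    exact Finset.sum_congr rfl fun i _ => by rw [pderiv_rPoly, eval_X]
  rwa [this] at h

lemma shape_fderiv {h h' : ℝ → ℝ} (hh : ∀ u, HasDerivAt h (h' u) u)
    (b C : ℝ) (Q : MvPolynomial (Fin q) ℝ) (s : ℕ) (y : Fin q → ℝ) :
    DifferentiableAt ℝ (Sh b Q s h C) y ∧
    ∀ j, fderiv ℝ (Sh b Q s h C) y (Pi.single j 1) =
      Sh b (pderiv j Q) s h C y + Sh (b * s) (Q * X j) (s - 1) h C y +
        Sh (b * C) (Q * X j) s h' C y := by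
  have h1 := (hasFDerivAt_evalP Q y).const_mul b
  have hrho := hasFDerivAt_rhoY y
  have hpow : HasFDerivAt (fun y : Fin q → ℝ => rhoY y ^ s)
      (((s : ℝ) * rhoY y ^ (s - 1)) • rhoL q y) y :=
    (hasDerivAt_pow s (rhoY y)).comp_hasFDerivAt y hrho
  have hcomp : HasFDerivAt (fun y : Fin q → ℝ => h (C * rhoY y))
      (h' (C * rhoY y) • (C • rhoL q y)) y :=
    (hh (C * rhoY y)).comp_hasFDerivAt y (hrho.const_mul C)
  have hprod := ((h1.mul hpow).mul hcomp)
  have hSh : HasFDerivAt (Sh b Q s h C) _ y := hprod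
  refine ⟨hSh.differentiableAt, fun j => ?_⟩
  rw [hSh.fderiv]
  simp only [ContinuousLinearMap.add_apply, ContinuousLinearMap.smul_apply,
    ContinuousLinearMap.coe_smul', Pi.smul_apply, smul_eq_mul, rhoL,
    ContinuousLinearMap.sum_apply, projL_apply, Pi.single_apply, mul_ite, mul_one,
    mul_zero, Finset.sum_ite_eq', Finset.mem_univ, if_true, Sh, eval_mul, eval_X, Pi.mul_apply]
  ring

variable {p : ℕ}

lemma pdy_Sh {h h' : ℝ → ℝ} (hh : ∀ u, HasDerivAt h (h' u) u)
    (b C : ℝ) (Q : MvPolynomial (Fin q) ℝ) (s : ℕ) (x : Fin p → ℝ) (y : Fin q → ℝ)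
    (j : Fin q) :
    pdy j (fun _ => Sh b Q s h C) x y =
      Sh b (pderiv j Q) s h C y + Sh (b * s) (Q * X j) (s - 1) h C y +
        Sh (b * C) (Q * X j) s h' C y :=
  (shape_fderiv hh b C Q s y).2 j

lemma sumsq (y : Fin q → ℝ) : ∑ j : Fin q, y j ^ 2 = 2 * rhoY y := by
  rw [rhoY]; ring

lemma pow_subone_mul (s : ℕ) (t : ℝ) : (s : ℝ) * t ^ (s - 1) * t = (s : ℝ) * t ^ s := by
  cases s with
  | zero => simp
  | succ n => rw [Nat.add_sub_cancel, pow_succ]; push_cast; ring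

lemma eulY_Sh {h h' : ℝ → ℝ} (hh : ∀ u, HasDerivAt h (h' u) u)
    (b C : ℝ) {l : ℕ} {Q : MvPolynomial (Fin q) ℝ} (hQ : Q.IsHomogeneous l) (s : ℕ)
    (x : Fin p → ℝ) (y : Fin q → ℝ) :
    eulY (fun _ => Sh b Q s h C) x y =
      ((l : ℝ) + 2 * s) * Sh b Q s h C y + 2 * C * Sh b Q (s + 1) h' C y := by
  have hterm : ∀ j : Fin q, y j * pdy j (fun _ => Sh b Q s h C) x y =
      (b * rhoY y ^ s * h (C * rhoY y)) * (y j * eval y (pderiv j Q)) +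
      ((b * s) * eval y Q * rhoY y ^ (s-1) * h (C * rhoY y) +
       (b * C) * eval y Q * rhoY y ^ s * h' (C * rhoY y)) * y j ^ 2 := by
    intro j
    rw [pdy_Sh hh b C Q s x y j]
    simp only [Sh, eval_mul, eval_X]
    ring
  unfold eulY
  rw [Finset.sum_congr rfl fun j _ => hterm j, Finset.sum_add_distrib, ← Finset.mul_sum,
    ← Finset.mul_sum, euler_eval hQ, sumsq]
  simp only [Sh]
  have h1 := pow_subone_mul s (rhoY y)
  calc b * rhoY y ^ s * h (C * rhoY y) * ((l:ℝ) * eval y Q) +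
        (b * s * eval y Q * rhoY y ^ (s-1) * h (C * rhoY y) +
         b * C * eval y Q * rhoY y ^ s * h' (C * rhoY y)) * (2 * rhoY y)
      = (l:ℝ) * (b * eval y Q * rhoY y ^ s * h (C * rhoY y)) +
        2 * (b * eval y Q * h (C * rhoY y)) * ((s:ℝ) * rhoY y ^ (s-1) * rhoY y) +
        2 * C * (b * eval y Q * (rhoY y ^ s * rhoY y) * h' (C * rhoY y)) := by ring
    _ = ((l:ℝ) + 2 * s) * (b * eval y Q * rhoY y ^ s * h (C * rhoY y)) +
        2 * C * (b * eval y Q * rhoY y ^ (s+1) * h' (C * rhoY y)) := by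
        rw [h1, ← pow_succ]
        ring

lemma pdy2_Sh {h h' h'' : ℝ → ℝ} (hh : ∀ u, HasDerivAt h (h' u) u)
    (hh' : ∀ u, HasDerivAt h' (h'' u) u)
    (b C : ℝ) (Q : MvPolynomial (Fin q) ℝ) (s : ℕ) (x : Fin p → ℝ) (y : Fin q → ℝ)
    (j : Fin q) :
    pdy j (pdy j (fun _ => Sh b Q s h C)) x y =
      (Sh b (pderiv j (pderiv j Q)) s h C y +
        Sh (b * s) (pderiv j Q * X j) (s - 1) h C y +
        Sh (b * C) (pderiv j Q * X j) s h' C y) +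
      (Sh (b * s) (pderiv j (Q * X j)) (s - 1) h C y +
        Sh (b * s * ((s - 1 : ℕ) : ℝ)) (Q * X j * X j) (s - 1 - 1) h C y +
        Sh (b * s * C) (Q * X j * X j) (s - 1) h' C y) +
      (Sh (b * C) (pderiv j (Q * X j)) s h' C y +
        Sh (b * C * s) (Q * X j * X j) (s - 1) h' C y +
        Sh (b * C * C) (Q * X j * X j) s h'' C y) := by
  have hfun : (pdy j (fun _ : Fin p → ℝ => Sh b Q s h C)) x = fun z =>
      Sh b (pderiv j Q) s h C z + Sh (b * s) (Q * X j) (s - 1) h C z +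
        Sh (b * C) (Q * X j) s h' C z :=
    funext fun z => (shape_fderiv hh b C Q s z).2 j
  show fderiv ℝ ((pdy j (fun _ : Fin p → ℝ => Sh b Q s h C)) x) y (Pi.single j 1) = _
  rw [hfun]
  have d1 := shape_fderiv hh b C (pderiv j Q) s y
  have d2 := shape_fderiv hh (b * s) C (Q * X j) (s - 1) y
  have d3 := shape_fderiv hh' (b * C) C (Q * X j) s y
  rw [fderiv_fun_add (d1.1.fun_add d2.1) d3.1, ContinuousLinearMap.add_apply,
    fderiv_fun_add d1.1 d2.1, ContinuousLinearMap.add_apply, d1.2 j, d2.2 j, d3.2 j]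

lemma lapY_Sh {h h' h'' : ℝ → ℝ} (hh : ∀ u, HasDerivAt h (h' u) u)
    (hh' : ∀ u, HasDerivAt h' (h'' u) u)
    {l : ℕ} {Q : MvPolynomial (Fin q) ℝ} (hQ : Q.IsHomogeneous l) (hQharm : lapP Q = 0)
    (b C : ℝ) (s : ℕ) (x : Fin p → ℝ) (y : Fin q → ℝ) :
    lapY (fun _ => Sh b Q s h C) x y =
      ((2 * (l : ℝ) + q) * s + 2 * (s : ℝ) * ((s : ℝ) - 1)) * Sh b Q (s - 1) h C y +
      ((2 * (l : ℝ) + q) + 4 * (s : ℝ)) * C * Sh b Q s h' C y +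
      2 * C ^ 2 * Sh b Q (s + 1) h'' C y := by
  have hterm : ∀ j : Fin q, pdy j (pdy j (fun _ : Fin p → ℝ => Sh b Q s h C)) x y =
      (b * rhoY y ^ s * h (C * rhoY y)) * eval y (pderiv j (pderiv j Q)) +
      (2 * (b * s * rhoY y ^ (s-1) * h (C * rhoY y)) +
        2 * (b * C * rhoY y ^ s * h' (C * rhoY y))) * (y j * eval y (pderiv j Q)) +
      ((b * (s:ℝ) * ((s-1:ℕ):ℝ) * rhoY y ^ (s-1-1) * h (C * rhoY y) +
        2 * (b * (s:ℝ) * C * rhoY y ^ (s-1) * h' (C * rhoY y)) +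
        b * C * C * rhoY y ^ s * h'' (C * rhoY y)) * eval y Q) * y j ^ 2 +
      (b * (s:ℝ) * rhoY y ^ (s-1) * h (C * rhoY y) +
        b * C * rhoY y ^ s * h' (C * rhoY y)) * eval y Q := by
    intro j
    rw [pdy2_Sh hh hh' b C Q s x y j]
    simp only [Sh, pderiv_mul, pderiv_X_self, mul_one, map_add, eval_mul, eval_X]
    ring
  unfold lapY
  rw [Finset.sum_congr rfl fun j _ => hterm j]
  rw [Finset.sum_add_distrib, Finset.sum_add_distrib, Finset.sum_add_distrib,
    ← Finset.mul_sum, ← Finset.mul_sum, ← Finset.mul_sum,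
    harmonic_eval hQharm, euler_eval hQ, sumsq, Finset.sum_const, Finset.card_univ,
    Fintype.card_fin, nsmul_eq_mul]
  simp only [Sh]
  rcases s with _ | _ | n
  · push_cast; ring
  · norm_num; ring
  · simp only [Nat.succ_sub_one]
    push_cast
    ring

lemma eulY_add_Sh {g1 g1' g2 g2' : ℝ → ℝ} (hg1 : ∀ u, HasDerivAt g1 (g1' u) u)
    (hg2 : ∀ u, HasDerivAt g2 (g2' u) u) (b1 b2 C : ℝ)
    (Q1 Q2 : MvPolynomial (Fin q) ℝ) (s1 s2 : ℕ) (x : Fin p → ℝ) (y : Fin q → ℝ) :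
    eulY (fun _ z => Sh b1 Q1 s1 g1 C z + Sh b2 Q2 s2 g2 C z) x y =
      eulY (fun _ => Sh b1 Q1 s1 g1 C) x y + eulY (fun _ => Sh b2 Q2 s2 g2 C) x y := by
  unfold eulY pdy
  rw [← Finset.sum_add_distrib]
  refine Finset.sum_congr rfl fun j _ => ?_
  rw [fderiv_fun_add (shape_fderiv hg1 b1 C Q1 s1 y).1 (shape_fderiv hg2 b2 C Q2 s2 y).1,
    ContinuousLinearMap.add_apply]
  ring

lemma eulY_congr {F G : (Fin p → ℝ) → (Fin q → ℝ) → ℝ} {x : Fin p → ℝ}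
    (h : F x = G x) (y : Fin q → ℝ) : eulY F x y = eulY G x y := by
  unfold eulY pdy
  rw [h]

/-- For f = h₁(x)h₂(y)ρ_y^μ Ψ_κ(ρ_xρ_y) with h₁, h₂ harmonic homogeneous of degrees k, l
and κ = k + p/2: formulas for E_y f, Δ_y f, and the scalar action of
E_y² + (q-2)E_y - r_y²Δ_y on f. -/
theorem Eq_casimir_oq_action (p q k l μ : ℕ)
    (h₁ : MvPolynomial (Fin p) ℝ) (h₂ : MvPolynomial (Fin q) ℝ)
    (hh₁ : h₁.IsHomogeneous k) (hharm₁ : lapP h₁ = 0)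
    (hh₂ : h₂.IsHomogeneous l) (hharm₂ : lapP h₂ = 0) :
    let κ : ℝ := (k : ℝ) + (p : ℝ) / 2
    let F : (Fin p → ℝ) → (Fin q → ℝ) → ℝ :=
      fun x y => eval x h₁ * eval y h₂ * rhoY y ^ μ * Psi κ (rhoX x * rhoY y)
    ∀ (x : Fin p → ℝ) (y : Fin q → ℝ),
      (eulY F x y =
        ((l : ℝ) + 2 * μ) * F x y +
          2 * eval x h₁ * eval y h₂ * rhoX x * rhoY y ^ (μ + 1) *
            deriv (Psi κ) (rhoX x * rhoY y)) ∧
      (lapY F x y =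
        ((2 * (l : ℝ) + q) * μ + 2 * μ * ((μ : ℝ) - 1)) *
            (eval x h₁ * eval y h₂ * rhoY y ^ (μ - 1) * Psi κ (rhoX x * rhoY y)) +
          ((2 * (l : ℝ) + q) + 4 * μ) *
            (eval x h₁ * eval y h₂ * rhoX x * rhoY y ^ μ *
              deriv (Psi κ) (rhoX x * rhoY y)) +
          2 * (eval x h₁ * eval y h₂ * rhoX x ^ 2 * rhoY y ^ (μ + 1) *
            deriv (deriv (Psi κ)) (rhoX x * rhoY y))) ∧
      (eulY (eulY F) x y + ((q : ℝ) - 2) * eulY F x y -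
          (∑ j : Fin q, y j ^ 2) * lapY F x y =
        (((l : ℝ) + 2 * μ) ^ 2 + ((q : ℝ) - 2) * ((l : ℝ) + 2 * μ) -
            2 * μ * (2 * (l : ℝ) + q + 2 * μ - 2)) * F x y) := by
  intro κ F x y
  have hκ : (0 : ℝ) ≤ κ := by positivity
  obtain ⟨hd1, hd2⟩ := psi_derivs κ hκ
  have hFxy : ∀ (x' : Fin p → ℝ) (y' : Fin q → ℝ), F x' y' =
      eval x' h₁ * eval y' h₂ * rhoY y' ^ μ * Psi κ (rhoX x' * rhoY y') := fun _ _ => rfl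
  have part1 : ∀ z : Fin q → ℝ, eulY F x z =
      ((l : ℝ) + 2 * μ) * Sh (eval x h₁) h₂ μ (Psi κ) (rhoX x) z +
        2 * rhoX x * Sh (eval x h₁) h₂ (μ + 1) (deriv (Psi κ)) (rhoX x) z :=
    fun z => eulY_Sh hd1 (eval x h₁) (rhoX x) hh₂ μ x z
  have part2 : lapY F x y =
      ((2 * (l : ℝ) + q) * μ + 2 * (μ : ℝ) * ((μ : ℝ) - 1)) *
          Sh (eval x h₁) h₂ (μ - 1) (Psi κ) (rhoX x) y +
        ((2 * (l : ℝ) + q) + 4 * (μ : ℝ)) * rhoX x *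
          Sh (eval x h₁) h₂ μ (deriv (Psi κ)) (rhoX x) y +
        2 * rhoX x ^ 2 * Sh (eval x h₁) h₂ (μ + 1) (deriv (deriv (Psi κ))) (rhoX x) y :=
    lapY_Sh hd1 hd2 hh₂ hharm₂ (eval x h₁) (rhoX x) μ x y
  refine ⟨?_, ?_, ?_⟩
  · rw [part1 y]; simp only [Sh, hFxy]; ring
  · rw [part2]; simp only [Sh, hFxy]; ring
  · have e2 : eulY (eulY F) x y =
        eulY (fun _ z => Sh (((l : ℝ) + 2 * μ) * eval x h₁) h₂ μ (Psi κ) (rhoX x) z +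
          Sh (2 * rhoX x * eval x h₁) h₂ (μ + 1) (deriv (Psi κ)) (rhoX x) z) x y := by
      apply eulY_congr
      funext z
      show eulY F x z = _
      rw [part1 z]; simp only [Sh]; ring
    rw [e2, eulY_add_Sh hd1 hd2 _ _ (rhoX x) h₂ h₂ μ (μ + 1) x y,
      eulY_Sh hd1 _ (rhoX x) hh₂ μ x y, eulY_Sh hd2 _ (rhoX x) hh₂ (μ + 1) x y,
      part1 y, part2, sumsq]
    simp only [Sh, hFxy]
    rcases μ with _ | m
    · push_cast; ring
    · simp only [Nat.succ_sub_one]; push_cast; ring
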